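/- For every integer n ≥ 2 and every triple (i,j,k) with 1 ≤ i, j ≤ n−1 and 0 ≤ k ≤ min{i−1, j−1, n−1−i, n−1−j}, the permutation b(i,j,k) is bigrassmannian, its unique left descent is i, and its unique right descent is j. -/

import Mathlib

namespace Paper

/-- The simple transposition `s_i = (i, i+1)` (1-based) in `S_n`, realized as a
permutation of `Fin n`. For `i` outside `{1, …, n-1}` we set `s i = 1`. -/
def s (n i : ℕ) : Equiv.Perm (Fin n) :=
  if h : 1 ≤ i ∧ i < n then Equiv.swap ⟨i - 1, by omega⟩ ⟨i, by omega⟩ else 1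

/-- The length of a permutation: its number of inversions. -/
def len {n : ℕ} (w : Equiv.Perm (Fin n)) : ℕ :=
  (Finset.univ.filter (fun p : Fin n × Fin n => p.1 < p.2 ∧ w p.2 < w p.1)).card

/-- `i` is a left descent of `w` if `1 ≤ i ≤ n-1` and `ℓ(s_i w) < ℓ(w)`. -/
def IsLeftDescent {n : ℕ} (w : Equiv.Perm (Fin n)) (i : ℕ) : Prop :=
  1 ≤ i ∧ i ≤ n - 1 ∧ len (s n i * w) < len w

/-- `i` is a right descent of `w` if `1 ≤ i ≤ n-1` and `ℓ(w s_i) < ℓ(w)`. -/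
def IsRightDescent {n : ℕ} (w : Equiv.Perm (Fin n)) (i : ℕ) : Prop :=
  1 ≤ i ∧ i ≤ n - 1 ∧ len (w * s n i) < len w

/-- A permutation is bigrassmannian if it has exactly one left descent and
exactly one right descent. -/
def Bigrassmannian {n : ℕ} (w : Equiv.Perm (Fin n)) : Prop :=
  (∃! i, IsLeftDescent w i) ∧ (∃! j, IsRightDescent w j)

/-- One step of the Bruhat order: `w ⋖ t * w` for a transposition `t`
with `ℓ(w) < ℓ(t w)`. -/
def BruhatStep {n : ℕ} (w w' : Equiv.Perm (Fin n)) : Prop :=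
  ∃ a b : Fin n, a ≠ b ∧ w' = Equiv.swap a b * w ∧ len w < len w'

/-- The Bruhat order on `S_n`: the partial order generated by `w < tw` whenever
`t` is a transposition and `ℓ(w) < ℓ(tw)`. -/
def BruhatLE {n : ℕ} : Equiv.Perm (Fin n) → Equiv.Perm (Fin n) → Prop :=
  Relation.ReflTransGen BruhatStep

/-- Strict Bruhat order. -/
def BruhatLT {n : ℕ} (x y : Equiv.Perm (Fin n)) : Prop :=
  BruhatLE x y ∧ x ≠ y

/-- The product `s_a s_{a+1} ⋯ s_b` of consecutive simple transpositions. -/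
def ascRun (n a b : ℕ) : Equiv.Perm (Fin n) :=
  ((List.range (b + 1 - a)).map (fun t => s n (a + t))).prod

/-- For `i ≤ j`: `b(i,j,k) = (s_i ⋯ s_{j+k})(s_{i-1} ⋯ s_{j+k-1}) ⋯ (s_{i-k} ⋯ s_j)`. -/
def bAux (n i j k : ℕ) : Equiv.Perm (Fin n) :=
  ((List.range (k + 1)).map (fun m => ascRun n (i - m) (j + k - m))).prod

/-- The bigrassmannian permutation `b(i,j,k)`; for `j < i` it is `b(j,i,k)⁻¹`. -/
def b (n i j k : ℕ) : Equiv.Perm (Fin n) :=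
  if i ≤ j then bAux n i j k else (bAux n j i k)⁻¹

/-- The value `w(i)` of a permutation `w ∈ S_n` at `i ∈ {1, …, n}`, 1-based. -/
def act {n : ℕ} (w : Equiv.Perm (Fin n)) (i : ℕ) : ℕ :=
  if h : 1 ≤ i ∧ i ≤ n then ((w ⟨i - 1, by omega⟩ : Fin n) : ℕ) + 1 else i

/-- The essential set of a permutation `w ∈ S_n`. -/
def Ess {n : ℕ} (w : Equiv.Perm (Fin n)) : Set (ℕ × ℕ) :=
  {p | 1 ≤ p.1 ∧ p.1 ≤ n - 1 ∧ 1 ≤ p.2 ∧ p.2 ≤ n - 1 ∧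
    p.1 < act w⁻¹ p.2 ∧ p.2 < act w p.1 ∧
    act w (p.1 + 1) ≤ p.2 ∧ act w⁻¹ (p.2 + 1) ≤ p.1}

/-- The rank function `r_w(i,j) = |{k ≤ i : w(k) ≤ j}|` (1-based). -/
def rnk {n : ℕ} (w : Equiv.Perm (Fin n)) (i j : ℕ) : ℕ :=
  ((Finset.Icc 1 i).filter (fun k => act w k ≤ j)).card

/-- The co-rank function `t_w(i,j) = min{i,j} - r_w(i,j)`. -/
def cork {n : ℕ} (w : Equiv.Perm (Fin n)) (i j : ℕ) : ℕ :=
  min i j - rnk w i j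

/-- The set of bigrassmannian permutations `y ≤ w` in Bruhat order. -/
def BSet {n : ℕ} (w : Equiv.Perm (Fin n)) : Set (Equiv.Perm (Fin n)) :=
  {y | Bigrassmannian y ∧ BruhatLE y w}

/-- The set of Bruhat-maximal elements of `BSet w`. -/
def BM {n : ℕ} (w : Equiv.Perm (Fin n)) : Set (Equiv.Perm (Fin n)) :=
  {y ∈ BSet w | ∀ z ∈ BSet w, BruhatLE y z → z = y}

/-! For `i ≤ j`, the permutation `b(i,j,k)` exchanges the adjacent blocks `[i-k, j]` and
`[j+1, j+k+1]` of `{1, …, n}`, each block keeping its order; the inverse of a block exchange is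
again one, so for `j < i` the same holds with other block sizes. Multiplying by an adjacent
transposition changes the number of inversions by exactly one, so `p` is a right descent of `w`
iff `w(p+1) < w(p)`, and a left descent iff it is a right descent of `w⁻¹`. A block exchange has
only one such `p`, the junction of its blocks, and that of its inverse is the other descent. -/

open Equiv

section Length

variable {n : ℕ}

lemma len_inv (w : Perm (Fin n)) : len w⁻¹ = len w := by
  unfold len
  apply Finset.card_nbij' (fun p => (w⁻¹ p.2, w⁻¹ p.1)) (fun p => (w p.2, w p.1)) <;>
    intro ⟨p, q⟩ <;> simp +contextual

lemma swap_apply_lt_swap_apply_iff {a b x y : Fin n} (hab : (a : ℕ) + 1 = b) :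
    swap a b y < swap a b x ↔ y < x ∧ ¬(x = b ∧ y = a) ∨ x = a ∧ y = b := by
  simp only [swap_apply_def]
  split_ifs <;> simp only [Fin.lt_def, Fin.ext_iff, not_and] at * <;> omega

def inversions (w : Perm (Fin n)) : Finset (Fin n × Fin n) :=
  Finset.univ.filter fun p => p.1 < p.2 ∧ w p.2 < w p.1

lemma len_eq_card_inversions (w : Perm (Fin n)) : len w = (inversions w).card := rfl

lemma inversions_swap_mul {w : Perm (Fin n)} {a b : Fin n} (hab : (a : ℕ) + 1 = b)
    (h : w⁻¹ a < w⁻¹ b) : inversions (swap a b * w) = insert (w⁻¹ a, w⁻¹ b) (inversions w) := by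
  ext ⟨p, q⟩
  simp only [inversions, Finset.mem_filter, Finset.mem_univ, true_and, Finset.mem_insert,
    Perm.mul_apply, swap_apply_lt_swap_apply_iff hab, Prod.mk.injEq, Perm.eq_inv_iff_eq]
  grind [Perm.inv_eq_iff_eq]

lemma len_swap_mul_of_lt {w : Perm (Fin n)} {a b : Fin n} (hab : (a : ℕ) + 1 = b)
    (h : w⁻¹ a < w⁻¹ b) : len (swap a b * w) = len w + 1 := by
  have hnew : (w⁻¹ a, w⁻¹ b) ∉ inversions w := by
    simp only [inversions, Finset.mem_filter, Finset.mem_univ, true_and, not_and, not_lt,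
      ← Perm.mul_apply, mul_inv_cancel, Perm.one_apply, Fin.le_def]
    omega
  rw [len_eq_card_inversions, inversions_swap_mul hab h, Finset.card_insert_of_notMem hnew,
    len_eq_card_inversions]

lemma len_swap_mul_lt_iff {w : Perm (Fin n)} {a b : Fin n} (hab : (a : ℕ) + 1 = b) :
    len (swap a b * w) < len w ↔ w⁻¹ b < w⁻¹ a := by
  have hne : w⁻¹ a ≠ w⁻¹ b := w⁻¹.injective.ne (by simp [Fin.ext_iff]; omega)
  rcases hne.lt_or_gt with h | h
  · exact iff_of_false (by rw [len_swap_mul_of_lt hab h]; omega) h.not_gt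
  · have h' := len_swap_mul_of_lt (w := swap a b * w) hab (by simpa using h)
    rw [← mul_assoc, swap_mul_self, one_mul] at h'
    exact iff_of_true (by omega) h

lemma len_mul_swap_lt_iff {w : Perm (Fin n)} {a b : Fin n} (hab : (a : ℕ) + 1 = b) :
    len (w * swap a b) < len w ↔ w b < w a := by
  rw [← len_inv (w * swap a b), mul_inv_rev, swap_inv, ← len_inv w, len_swap_mul_lt_iff hab,
    inv_inv]

end Length

section Act

variable {n : ℕ}

lemma act_coe_add_one (w : Perm (Fin n)) (x : Fin n) : act w (x + 1) = w x + 1 := by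
  simp [act]

lemma act_of_not_mem (w : Perm (Fin n)) {p : ℕ} (hp : ¬(1 ≤ p ∧ p ≤ n)) : act w p = p := by
  simp [act, hp]

lemma act_mul (w v : Perm (Fin n)) (p : ℕ) : act (w * v) p = act w (act v p) := by
  by_cases hp : 1 ≤ p ∧ p ≤ n
  · obtain ⟨x, rfl⟩ : ∃ x : Fin n, p = x + 1 := ⟨⟨p - 1, by omega⟩, by simp; omega⟩
    simp only [act_coe_add_one, Perm.mul_apply]
  · simp only [act_of_not_mem _ hp]

lemma act_inv_act (w : Perm (Fin n)) (p : ℕ) : act w⁻¹ (act w p) = p := by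
  by_cases hp : 1 ≤ p ∧ p ≤ n
  · obtain ⟨x, rfl⟩ : ∃ x : Fin n, p = x + 1 := ⟨⟨p - 1, by omega⟩, by simp; omega⟩
    simp only [act_coe_add_one, ← Perm.mul_apply, inv_mul_cancel, Perm.one_apply]
  · simp only [act_of_not_mem _ hp]

lemma isRightDescent_iff_act_lt {w : Perm (Fin n)} {p : ℕ} :
    IsRightDescent w p ↔ 1 ≤ p ∧ p ≤ n - 1 ∧ act w (p + 1) < act w p := by
  refine and_congr_right fun hp1 => and_congr_right fun hpn => ?_
  have hs : s n p = swap ⟨p - 1, by omega⟩ ⟨p, by omega⟩ := dif_pos ⟨hp1, by omega⟩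
  have hact : act w p = w ⟨p - 1, by omega⟩ + 1 := by
    simpa [Nat.sub_add_cancel hp1] using act_coe_add_one w ⟨p - 1, by omega⟩
  have hact_succ : act w (p + 1) = w ⟨p, by omega⟩ + 1 := act_coe_add_one w ⟨p, by omega⟩
  rw [hs, len_mul_swap_lt_iff (by simp; omega), hact, hact_succ, Fin.lt_def]
  omega

lemma s_inv (n i : ℕ) : (s n i)⁻¹ = s n i := by
  unfold s
  split
  · exact swap_inv _ _
  · rfl

lemma isLeftDescent_iff_isRightDescent_inv {w : Perm (Fin n)} {p : ℕ} :
    IsLeftDescent w p ↔ IsRightDescent w⁻¹ p := by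
  unfold IsLeftDescent IsRightDescent
  rw [← len_inv (s n p * w), mul_inv_rev, s_inv, len_inv w]

end Act

/-- The permutation of `ℕ` exchanging the adjacent blocks `[a, a + l)` and `[a + l, a + l + m)`,
each keeping its internal order. -/
def blockSwap (a l m p : ℕ) : ℕ :=
  if a ≤ p ∧ p < a + l then p + m else if a + l ≤ p ∧ p < a + l + m then p - l else p

lemma blockSwap_blockSwap (a l m p : ℕ) : blockSwap a m l (blockSwap a l m p) = p := by
  unfold blockSwap
  split_ifs <;> omega

lemma blockSwap_succ_lt_iff {a l m : ℕ} (hl : 0 < l) (hm : 0 < m) (p : ℕ) :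
    blockSwap a l m (p + 1) < blockSwap a l m p ↔ p + 1 = a + l := by
  unfold blockSwap
  split_ifs <;> omega

section BlockSwap

variable {n : ℕ} {w : Perm (Fin n)} {a l m : ℕ}

lemma act_inv_eq_blockSwap (hw : ∀ p, act w p = blockSwap a l m p) (q : ℕ) :
    act w⁻¹ q = blockSwap a m l q := by
  conv_lhs => rw [← blockSwap_blockSwap a m l q, ← hw]
  exact act_inv_act w _

lemma isRightDescent_iff_of_act_eq_blockSwap (ha : 1 ≤ a) (hl : 0 < l) (hm : 0 < m)
    (hn : a + l + m ≤ n + 1) (hw : ∀ p, act w p = blockSwap a l m p) (p : ℕ) :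
    IsRightDescent w p ↔ p = a + l - 1 := by
  rw [isRightDescent_iff_act_lt, hw, hw, blockSwap_succ_lt_iff hl hm]
  omega

lemma isLeftDescent_iff_of_act_eq_blockSwap (ha : 1 ≤ a) (hl : 0 < l) (hm : 0 < m)
    (hn : a + l + m ≤ n + 1) (hw : ∀ p, act w p = blockSwap a l m p) (p : ℕ) :
    IsLeftDescent w p ↔ p = a + m - 1 := by
  rw [isLeftDescent_iff_isRightDescent_inv]
  exact isRightDescent_iff_of_act_eq_blockSwap ha hm hl (by omega) (act_inv_eq_blockSwap hw) p

theorem bigrassmannian_of_act_eq_blockSwap (ha : 1 ≤ a) (hl : 0 < l) (hm : 0 < m)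
    (hn : a + l + m ≤ n + 1) (hw : ∀ p, act w p = blockSwap a l m p) :
    Bigrassmannian w ∧ IsLeftDescent w (a + m - 1) ∧ IsRightDescent w (a + l - 1) := by
  have hL := isLeftDescent_iff_of_act_eq_blockSwap ha hl hm hn hw
  have hR := isRightDescent_iff_of_act_eq_blockSwap ha hl hm hn hw
  exact ⟨⟨(existsUnique_congr hL).mpr existsUnique_eq, (existsUnique_congr hR).mpr existsUnique_eq⟩,
    (hL _).mpr rfl, (hR _).mpr rfl⟩

end BlockSwap

section Products

variable {n : ℕ}

lemma act_s {a : ℕ} (ha : 1 ≤ a) (han : a < n) (p : ℕ) : act (s n a) p = blockSwap a 1 1 p := by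
  by_cases hp : 1 ≤ p ∧ p ≤ n
  · obtain ⟨x, rfl⟩ : ∃ x : Fin n, p = x + 1 := ⟨⟨p - 1, by omega⟩, by simp; omega⟩
    rw [act_coe_add_one, s, dif_pos ⟨ha, han⟩, swap_apply_def]
    unfold blockSwap
    split_ifs <;> simp_all [Fin.ext_iff] <;> omega
  · rw [act_of_not_mem _ hp]
    unfold blockSwap
    split_ifs <;> omega

lemma ascRun_self (a : ℕ) : ascRun n a a = s n a := by
  simp [ascRun]

lemma ascRun_succ_right {a b : ℕ} (h : a ≤ b + 1) :
    ascRun n a (b + 1) = ascRun n a b * s n (b + 1) := by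
  rw [ascRun, ascRun, show b + 1 + 1 - a = b + 1 - a + 1 by omega, List.range_succ,
    List.map_append, List.prod_append]
  simp [show a + (b + 1 - a) = b + 1 by omega]

lemma act_ascRun {a b : ℕ} (ha : 1 ≤ a) (hab : a ≤ b) (hbn : b < n) (p : ℕ) :
    act (ascRun n a b) p = blockSwap a (b + 1 - a) 1 p := by
  induction b, hab using Nat.le_induction generalizing p with
  | base => simp [ascRun_self, act_s ha hbn]
  | succ b hab ih =>
    rw [ascRun_succ_right (by omega), act_mul, act_s (by omega) hbn, ih (by omega)]
    unfold blockSwap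
    split_ifs <;> omega

lemma bAux_succ (i j k : ℕ) :
    bAux n i j (k + 1) = ascRun n i (j + (k + 1)) * bAux n (i - 1) j k := by
  rw [bAux, bAux, List.range_succ_eq_map]
  simp only [List.map_cons, List.prod_cons, List.map_map, Function.comp_def, Nat.sub_zero]
  congr 2
  refine List.map_congr_left fun t _ => ?_
  congr 1 <;> omega

lemma act_bAux {i j k : ℕ} (hki : k < i) (hij : i ≤ j) (hjn : j + k < n) (p : ℕ) :
    act (bAux n i j k) p = blockSwap (i - k) (j + 1 - i + k) (k + 1) p := by
  induction k generalizing i p with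
  | zero => simpa [bAux] using act_ascRun (by omega) hij (by omega) p
  | succ k ih =>
    rw [bAux_succ, act_mul, ih (by omega) (by omega) (by omega),
      act_ascRun (by omega) (by omega) (by omega)]
    unfold blockSwap
    split_ifs <;> omega

end Products

theorem stmt4_general (n : ℕ) (i j k : ℕ)
    (hi1 : 1 ≤ i) (hi2 : i ≤ n - 1) (hj1 : 1 ≤ j) (hj2 : j ≤ n - 1)
    (hk : k ≤ min (min (i - 1) (j - 1)) (min (n - 1 - i) (n - 1 - j))) :
    Bigrassmannian (b n i j k) ∧
      IsLeftDescent (b n i j k) i ∧ IsRightDescent (b n i j k) j := by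
  rcases le_or_gt i j with hij | hji
  · have hact (p : ℕ) : act (b n i j k) p = blockSwap (i - k) (j + 1 - i + k) (k + 1) p := by
      rw [b, if_pos hij, act_bAux (by omega) hij (by omega)]
    have := bigrassmannian_of_act_eq_blockSwap (by omega) (by omega) (by omega) (by omega) hact
    rwa [show i - k + (k + 1) - 1 = i by omega, show i - k + (j + 1 - i + k) - 1 = j by omega]
      at this
  · have hact (p : ℕ) : act (b n i j k) p = blockSwap (j - k) (k + 1) (i + 1 - j + k) p := by
      rw [b, if_neg (by omega)]
      exact act_inv_eq_blockSwap (act_bAux (by omega) hji.le (by omega)) p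
    have := bigrassmannian_of_act_eq_blockSwap (by omega) (by omega) (by omega) (by omega) hact
    rwa [show j - k + (i + 1 - j + k) - 1 = i by omega, show j - k + (k + 1) - 1 = j by omega]
      at this

theorem stmt4 (n : ℕ) (hn : 2 ≤ n) (i j k : ℕ)
    (hi1 : 1 ≤ i) (hi2 : i ≤ n - 1) (hj1 : 1 ≤ j) (hj2 : j ≤ n - 1)
    (hk : k ≤ min (min (i - 1) (j - 1)) (min (n - 1 - i) (n - 1 - j))) :
    Bigrassmannian (b n i j k) ∧
      IsLeftDescent (b n i j k) i ∧ IsRightDescent (b n i j k) j :=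
  stmt4_general n i j k hi1 hi2 hj1 hj2 hk

end Paper
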